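/- arXiv:1709.08033 — 3 statements merged into one kernel-verified Lean document; each statement's English description precedes it below -/
import Mathlib

section
/- Let (e_1, …, e_r) be a basis of C_n^r with each e_i of order n. The sequence consisting of n − 1 copies of ∑_{i∈I} e_i for each non-empty subset I ⊆ {1,…,r} contains no non-empty zero-sum subsequence of length at most n. -/
open Multiset Finset Filter

/-- The Davenport constant: smallest `t ≥ 1` such that every multiset of `t` or more
elements of `G` has a non-empty zero-sum sub-multiset. -/
noncomputable def DavCon (G : Type*) [AddCommGroup G] : ℕ :=
  sInf {t : ℕ | 1 ≤ t ∧ ∀ S : Multiset G, t ≤ Multiset.card S →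
    ∃ T, T ≤ S ∧ T ≠ 0 ∧ T.sum = 0}

/-- The η-invariant: smallest `t ≥ 1` such that every multiset of `t` or more elements of `G`
has a non-empty zero-sum sub-multiset of length at most `exp G`. -/
noncomputable def EtaCon (G : Type*) [AddCommGroup G] : ℕ :=
  sInf {t : ℕ | 1 ≤ t ∧ ∀ S : Multiset G, t ≤ Multiset.card S →
    ∃ T, T ≤ S ∧ T ≠ 0 ∧ Multiset.card T ≤ AddMonoid.exponent G ∧ T.sum = 0}

/-- `maxPP n` is the greatest prime power dividing `n`, with `maxPP 1 = 1`. -/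
def maxPP (n : ℕ) : ℕ := WithBot.unbotD 1 ((n.divisors).filter IsPrimePow).max

/-! Lift a short zero-sum subsequence to a multiset `T` of non-empty index sets. Its sum is
`∑ bᵢ • eᵢ`, where `bᵢ` counts the members of `T` containing `i`, so independence of the `eᵢ`
gives `n ∣ bᵢ ≤ card T ≤ n`. Hence every `i` lies in all or in none of the members of `T`, so
`T` consists of `n` copies of a single set, which occurs only `n - 1` times in the sequence. -/

theorem Multiset.exists_le_eq_map_of_le_map {α β : Type*} {f : α → β} {s : Multiset α}
    {t : Multiset β} (h : t ≤ s.map f) : ∃ u ≤ s, t = u.map f := by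
  induction s using Quotient.inductionOn
  induction t using Quotient.inductionOn
  obtain ⟨l, hperm, hsub⟩ := h
  obtain ⟨u, hu, rfl⟩ := List.sublist_map_iff.mp hsub
  exact ⟨u, hu.subperm, (Quotient.sound hperm).symm⟩

theorem Finset.sum_replicate_eq_map_nsmul {α β : Type*} (s : Finset α) (f : α → β) (k : ℕ) :
    ∑ a ∈ s, Multiset.replicate k (f a) = (k • s.val).map f := by
  simp only [← Multiset.nsmul_singleton, ← Finset.smul_sum, Multiset.map_nsmul]
  congr 1
  simpa [Function.comp_def] using Multiset.sum_map_singleton (s.val.map f)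

theorem Multiset.sum_map_sum_eq_sum_card_filter_nsmul {ι G : Type*} [Fintype ι] [DecidableEq ι]
    [AddCommMonoid G] (e : ι → G) (T : Multiset (Finset ι)) :
    (T.map fun I => ∑ i ∈ I, e i).sum = ∑ i, card (T.filter (i ∈ ·)) • e i := by
  induction T using Multiset.induction with
  | empty => simp
  | cons I T ih =>
    simp [Multiset.filter_cons, ih, apply_ite, add_smul, Finset.sum_add_distrib]

theorem dvd_of_sum_nsmul_eq_zero {ι G : Type*} [Fintype ι] [AddCommGroup G] {n : ℕ} {e : ι → G}
    (hord : ∀ i, addOrderOf (e i) = n)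
    (hinj : Function.Injective fun a : ι → ZMod n => ∑ i, (a i).val • e i)
    {b : ι → ℕ} (hb : ∑ i, b i • e i = 0) (i : ι) : n ∣ b i := by
  have hval : ∀ j, ((b j : ZMod n)).val • e j = b j • e j := fun j => by
    rw [ZMod.val_natCast, ← hord j, mod_addOrderOf_nsmul]
  have h0 : (fun j => (b j : ZMod n)) = 0 := hinj <| by
    simpa only [hval, Pi.zero_apply, ZMod.val_zero, zero_smul, Finset.sum_const_zero] using hb
  exact (ZMod.natCast_eq_zero_iff _ _).mp (congrFun h0 i)

theorem Multiset.eq_replicate_of_dvd_card_filter_mem {ι : Type*} [DecidableEq ι] {n : ℕ}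
    {T : Multiset (Finset ι)} (hT : T ≠ 0) (hcard : card T ≤ n) (hne : ∀ I ∈ T, I.Nonempty)
    (hdvd : ∀ i, n ∣ card (T.filter (i ∈ ·))) : ∃ I, T = replicate n I := by
  have hfull : ∀ i, ∀ I ∈ T, i ∈ I → T.filter (i ∈ ·) = T ∧ card T = n := by
    intro i I hI hi
    have hpos : 0 < card (T.filter (i ∈ ·)) :=
      card_pos_iff_exists_mem.2 ⟨I, mem_filter.2 ⟨hI, hi⟩⟩
    have hn_le := Nat.le_of_dvd hpos (hdvd i)
    have hle_card := card_le_card (filter_le (i ∈ ·) T)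
    exact ⟨eq_of_le_of_card_le (filter_le _ _) (by omega), by omega⟩
  have hmem : ∀ i, ∀ I ∈ T, i ∈ I → ∀ J ∈ T, i ∈ J := fun i I hI hi =>
    filter_eq_self.1 (hfull i I hI hi).1
  obtain ⟨I, hI⟩ := exists_mem_of_ne_zero hT
  obtain ⟨i, hi⟩ := hne I hI
  refine ⟨I, eq_replicate.2 ⟨(hfull i I hI hi).2, fun J hJ => ?_⟩⟩
  ext j
  exact ⟨fun hj => hmem j J hJ hj I hI, fun hj => hmem j I hI hj J hJ⟩

theorem stmt_5_general (G : Type*) [AddCommGroup G] (r n : ℕ)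
    (e : Fin r → G) (hord : ∀ i, addOrderOf (e i) = n)
    (hbasis : Function.Bijective
      (fun a : (Fin r → ZMod n) => ∑ i, (a i).val • e i)) :
    ∀ T : Multiset G,
      T ≤ (∑ I ∈ Finset.univ.powerset.filter (fun I : Finset (Fin r) => I.Nonempty),
            Multiset.replicate (n - 1) (∑ i ∈ I, e i)) →
      T ≠ 0 → Multiset.card T ≤ n → T.sum ≠ 0 := by
  intro T hT hT0 hcard hsum
  set F := Finset.univ.powerset.filter (fun I : Finset (Fin r) => I.Nonempty)
  rw [Finset.sum_replicate_eq_map_nsmul] at hT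
  obtain ⟨T', hT'F, rfl⟩ := exists_le_eq_map_of_le_map hT
  have hne : ∀ I ∈ T', I.Nonempty := fun I hI =>
    (Finset.mem_filter.1 (show I ∈ F from (Multiset.mem_nsmul.1 (mem_of_le hT'F hI)).2)).2
  obtain ⟨I, rfl⟩ := eq_replicate_of_dvd_card_filter_mem (by simpa using hT0)
    (by simpa using hcard) hne
    (dvd_of_sum_nsmul_eq_zero hord hbasis.1 <| by rwa [← sum_map_sum_eq_sum_card_filter_nsmul])
  have hcount := count_le_of_le I hT'F
  rw [count_replicate_self, count_nsmul] at hcount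
  have hcountF := Nat.mul_le_mul_left (n - 1) (nodup_iff_count_le_one.1 F.nodup I)
  have hn : n ≠ 0 := by rintro rfl; simp at hT0
  omega

/-- the sequence of `n−1` copies of each subset sum `∑_{i∈I} e_i` has no
non-empty zero-sum subsequence of length at most `n`. -/
theorem stmt_5 (G : Type*) [AddCommGroup G] (r n : ℕ) (hn : 1 ≤ n) (hr : 1 ≤ r)
    (e : Fin r → G) (hord : ∀ i, addOrderOf (e i) = n)
    (hbasis : Function.Bijective
      (fun a : (Fin r → ZMod n) => ∑ i, (a i).val • e i)) :
    ∀ T : Multiset G,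
      T ≤ (∑ I ∈ Finset.univ.powerset.filter (fun I : Finset (Fin r) => I.Nonempty),
            Multiset.replicate (n - 1) (∑ i ∈ I, e i)) →
      T ≠ 0 → Multiset.card T ≤ n → T.sum ≠ 0 :=
  stmt_5_general G r n e hord hbasis
end

section
/- Let G be a finite abelian group, H ≤ G a subgroup, and S a sequence over G of length |S| ≥ exp(G/H)·(d − 1) + η(G/H) for some d ≥ 1. Then one can extract d pairwise disjoint non-empty subsequences S'_1, …, S'_d of S such that σ(S'_i) ∈ H and |S'_i| ≤ exp(G/H) for every i. -/
/-!
Pull a short zero-sum subsequence of the image of `S` in `G ⧸ H` back to `G`: it is a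
subsequence of length at most `exp (G ⧸ H)` with sum in `H`. Remove it and repeat; after
`d - 1` removals at least `η (G ⧸ H)` terms are still left, so a `d`-th extraction is possible.
-/

open Multiset Finset Filter

theorem Multiset.exists_le_map_eq_of_le_map {α β : Type*} {f : α → β} {S : Multiset α}
    {T' : Multiset β} (h : T' ≤ S.map f) : ∃ T ≤ S, T.map f = T' := by
  induction S using Quot.inductionOn
  induction T' using Quot.inductionOn
  obtain ⟨l, hperm, hsub⟩ := h
  obtain ⟨l', hl', rfl⟩ := List.sublist_map_iff.mp hsub
  exact ⟨l', hl'.subperm, Quot.sound hperm⟩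

theorem Multiset.exists_lt_count_of_mul_lt_card {α : Type*} [Fintype α] [DecidableEq α]
    {S : Multiset α} {n : ℕ} (h : Fintype.card α * n < card S) : ∃ a, n < S.count a := by
  have hsum : ∑ _a : α, n < ∑ a : α, S.count a := by
    rwa [Finset.sum_const, smul_eq_mul, Multiset.sum_count_eq_card fun a _ => mem_univ a]
  obtain ⟨a, -, ha⟩ := Finset.exists_lt_of_sum_lt hsum
  exact ⟨a, ha⟩

/-- By pigeonhole, any `|Q| (exp Q - 1) + 1` elements contain some `x` repeated `exp Q` times,
and `exp Q • x = 0`; so the set defining `EtaCon Q` is nonempty. -/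
theorem exists_zero_sum_of_etaCon_le (Q : Type*) [AddCommGroup Q] [Finite Q]
    (S : Multiset Q) (hS : EtaCon Q ≤ card S) :
    ∃ T, T ≤ S ∧ T ≠ 0 ∧ card T ≤ AddMonoid.exponent Q ∧ T.sum = 0 := by
  classical
  cases nonempty_fintype Q
  set e := AddMonoid.exponent Q
  have he : 0 < e := Nat.pos_of_ne_zero AddMonoid.exponent_ne_zero_of_finite
  have hne : {t : ℕ | 1 ≤ t ∧ ∀ S : Multiset Q, t ≤ card S →
      ∃ T, T ≤ S ∧ T ≠ 0 ∧ card T ≤ e ∧ T.sum = 0}.Nonempty := by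
    refine ⟨Fintype.card Q * (e - 1) + 1, by omega, fun S hS => ?_⟩
    obtain ⟨x, hx⟩ := Multiset.exists_lt_count_of_mul_lt_card (n := e - 1) (S := S) (by omega)
    refine ⟨replicate e x, le_count_iff_replicate_le.mp (by omega), ?_, by simp, ?_⟩
    · simpa [← Multiset.card_pos] using he
    · rw [sum_replicate, AddMonoid.exponent_nsmul_eq_zero]
  exact (Nat.sInf_mem hne).2 S hS

theorem exists_sum_mem_of_etaCon_quotient_le {G : Type*} [AddCommGroup G] (H : AddSubgroup G)
    [Finite (G ⧸ H)] (S : Multiset G) (hS : EtaCon (G ⧸ H) ≤ card S) :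
    ∃ T ≤ S, card T ≤ AddMonoid.exponent (G ⧸ H) ∧ (T ≠ 0 ∧ T.sum ∈ H) := by
  let π := QuotientAddGroup.mk' H
  obtain ⟨T', hT'S, hT'ne, hT'card, hT'sum⟩ :=
    exists_zero_sum_of_etaCon_le (G ⧸ H) (S.map π) (by rwa [Multiset.card_map])
  obtain ⟨T, hTS, rfl⟩ := Multiset.exists_le_map_eq_of_le_map hT'S
  refine ⟨T, hTS, by rwa [Multiset.card_map] at hT'card, by simpa using hT'ne, ?_⟩
  rwa [← map_multiset_sum, QuotientAddGroup.mk'_apply, QuotientAddGroup.eq_zero_iff] at hT'sum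

theorem Multiset.exists_fin_sum_le_of_forall_exists_le {α : Type*} (P : Multiset α → Prop)
    (e N : ℕ) (hP : ∀ S : Multiset α, N ≤ card S → ∃ T ≤ S, card T ≤ e ∧ P T)
    (d : ℕ) (S : Multiset α) (hS : e * d + N ≤ card S) :
    ∃ S' : Fin (d + 1) → Multiset α, ∑ i, S' i ≤ S ∧ ∀ i, card (S' i) ≤ e ∧ P (S' i) := by
  classical
  induction d generalizing S with
  | zero =>
    obtain ⟨T, hTS, hT⟩ := hP S (by omega)
    exact ⟨fun _ => T, by simpa using hTS, fun _ => hT⟩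
  | succ d ih =>
    obtain ⟨T, hTS, hTe, hPT⟩ := hP S (by omega)
    have hrest : e * d + N ≤ card (S - T) := by
      rw [card_sub hTS]
      have := card_le_card hTS
      rw [Nat.mul_succ] at hS
      omega
    obtain ⟨S', hS'S, hS'⟩ := ih (S - T) hrest
    refine ⟨Fin.cons T S', ?_, Fin.cases ⟨hTe, hPT⟩ hS'⟩
    rw [Fin.sum_univ_succ, Fin.cons_zero]
    simpa only [Fin.cons_succ] using (le_tsub_iff_left hTS).mp hS'S

theorem stmt_7_general (G : Type*) [AddCommGroup G] [Fintype G] (H : AddSubgroup G)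
    (d : ℕ) (S : Multiset G)
    (hS : AddMonoid.exponent (G ⧸ H) * (d - 1) + EtaCon (G ⧸ H) ≤ Multiset.card S) :
    ∃ S' : Fin d → Multiset G, (∑ i, S' i) ≤ S ∧
      ∀ i, S' i ≠ 0 ∧ (S' i).sum ∈ H ∧
        Multiset.card (S' i) ≤ AddMonoid.exponent (G ⧸ H) := by
  cases d with
  | zero => exact ⟨finZeroElim, by simp, finZeroElim⟩
  | succ m =>
    obtain ⟨S', hS'S, hS'⟩ := Multiset.exists_fin_sum_le_of_forall_exists_le _ _ _
      (exists_sum_mem_of_etaCon_quotient_le H) m S hS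
    exact ⟨S', hS'S, fun i => ⟨(hS' i).2.1, (hS' i).2.2, (hS' i).1⟩⟩

/-- extraction of `d` disjoint short subsequences with sums in `H`. -/
theorem stmt_7 (G : Type*) [AddCommGroup G] [Fintype G] (H : AddSubgroup G)
    (d : ℕ) (hd : 1 ≤ d) (S : Multiset G)
    (hS : AddMonoid.exponent (G ⧸ H) * (d - 1) + EtaCon (G ⧸ H) ≤ Multiset.card S) :
    ∃ S' : Fin d → Multiset G, (∑ i, S' i) ≤ S ∧
      ∀ i, S' i ≠ 0 ∧ (S' i).sum ∈ H ∧
        Multiset.card (S' i) ≤ AddMonoid.exponent (G ⧸ H) :=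
  stmt_7_general G H d S hS
end

section
/- For all integers n, r ≥ 1, D(C_n^r) ≤ r(n − 1) + 1 + (c_r − r)·(n/P(n) − 1), where c_r is any constant such that η(C_m^r) ≤ c_r(m − 1) + 1 for all m ≥ 1 and c_r ≥ r. -/
/-!
Write `n = q * m` with `q = P(n) = p ^ k`. Reduction mod `m` maps `(ℤ/n)^r` onto `(ℤ/m)^r`, and
its kernel is the image of `(ℤ/q)^r` under multiplication by `m`. Since among any `c(m-1)+1`
elements of `(ℤ/m)^r` some at most `m` of them sum to zero, a sequence of length
`c(m-1)+1 + m·r(q-1)`, which is the claimed bound, contains `r(q-1)+1` disjoint non-empty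
subsequences whose sums lie in that kernel. Olson's theorem `D((ℤ/p^k)^r) ≤ r(p^k-1)+1` then
yields a zero-sum union of some of them. Olson's theorem holds because in `𝔽_p[G]` the
augmentation ideal is generated by the `r` elements `X^{e_j} - 1`, whose `p^k`-th powers vanish,
so any product of more than `r(p^k-1)` elements `X^g - 1` is zero; expanding such a product shows
that its coefficient at `0` is `±1` unless some non-empty subfamily sums to zero.
-/

open Multiset Finset Filter

theorem Ideal.sup_pow_add_add_one_le {R : Type*} [CommSemiring R] (I J : Ideal R) (a b : ℕ) :
    (I ⊔ J) ^ (a + b + 1) ≤ I ^ (a + 1) ⊔ J ^ (b + 1) := by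
  rw [← Ideal.add_eq_sup, ← Ideal.add_eq_sup, add_pow, Ideal.sum_eq_sup]
  refine Finset.sup_le fun i _ => ?_
  by_cases h : a + 1 ≤ i
  · exact Ideal.mul_le_left.trans (Ideal.mul_le_left.trans
      ((Ideal.pow_le_pow_right h).trans le_sup_left))
  · refine Ideal.mul_le_left.trans (Ideal.mul_le_right.trans
      ((Ideal.pow_le_pow_right ?_).trans le_sup_right))
    omega

theorem Ideal.span_image_pow_eq_bot {R ι : Type*} [CommSemiring R] [DecidableEq ι]
    (z : ι → R) (n : ℕ) (s : Finset ι) (hz : ∀ i ∈ s, z i ^ (n + 1) = 0) :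
    Ideal.span (z '' s) ^ (s.card * n + 1) = ⊥ := by
  induction s using Finset.induction_on with
  | empty => simp
  | insert j s hj ih =>
    rw [Finset.coe_insert, Set.image_insert_eq, Ideal.span_insert,
      Finset.card_insert_of_notMem hj, eq_bot_iff]
    calc (Ideal.span {z j} ⊔ Ideal.span (z '' s)) ^ ((s.card + 1) * n + 1)
        = (Ideal.span {z j} ⊔ Ideal.span (z '' s)) ^ (n + s.card * n + 1) := by ring_nf
      _ ≤ Ideal.span {z j} ^ (n + 1) ⊔ Ideal.span (z '' s) ^ (s.card * n + 1) :=
        Ideal.sup_pow_add_add_one_le _ _ _ _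
      _ = ⊥ := by
        rw [Ideal.span_singleton_pow, hz j (Finset.mem_insert_self j s),
          ih fun i hi => hz i (Finset.mem_insert_of_mem hi)]
        simp

theorem Ideal.prod_eq_zero_of_mem_span_range {R ι κ : Type*} [CommSemiring R] [Fintype ι]
    (z : ι → R) (n : ℕ) (hz : ∀ i, z i ^ (n + 1) = 0) (s : Finset κ) (a : κ → R)
    (ha : ∀ i ∈ s, a i ∈ Ideal.span (Set.range z)) (hs : Fintype.card ι * n < s.card) :
    ∏ i ∈ s, a i = 0 := by
  classical
  have hmem := Ideal.prod_mem_prod ha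
  rw [Finset.prod_const, ← Set.image_univ, ← Finset.coe_univ] at hmem
  rw [← Ideal.mem_bot, ← Ideal.span_image_pow_eq_bot z n Finset.univ fun i _ => hz i]
  exact Ideal.pow_le_pow_right hs hmem

namespace AddMonoidAlgebra

theorem prod_single_sub_one {k G κ : Type*} [CommRing k] [AddCommMonoid G] [DecidableEq κ]
    (s : Finset κ) (g : κ → G) :
    ∏ i ∈ s, (single (g i) (1 : k) - 1) =
      ∑ t ∈ s.powerset, single (∑ i ∈ t, g i) ((-1 : k) ^ (s \ t).card) := by
  simp_rw [sub_eq_add_neg, Finset.prod_add]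
  refine Finset.sum_congr rfl fun t _ => ?_
  rw [prod_single, Finset.prod_const_one, Finset.prod_const, one_def, ← single_neg, single_pow,
    single_mul_single, nsmul_zero, add_zero, one_mul]

theorem exists_sum_eq_zero_of_prod_single_sub_one_eq_zero {k G κ : Type*} [CommRing k]
    [Nontrivial k] [AddCommMonoid G] (s : Finset κ) (g : κ → G)
    (h : ∏ i ∈ s, (single (g i) (1 : k) - 1) = 0) :
    ∃ t ⊆ s, t.Nonempty ∧ ∑ i ∈ t, g i = 0 := by
  classical
  by_contra! hne
  have hcoeff := congrArg (fun f : AddMonoidAlgebra k G => f.coeff 0)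
    ((prod_single_sub_one (k := k) s g).symm.trans h)
  simp only [coeff_sum, coeff_single, Finsupp.finsetSum_apply, Finsupp.single_apply] at hcoeff
  rw [Finset.sum_eq_single_of_mem ∅ (Finset.empty_mem_powerset s)] at hcoeff
  · simp only [Finset.sum_empty, if_true, Finset.sdiff_empty] at hcoeff
    exact neg_one_pow_ne_zero _ hcoeff
  · intro t hts ht
    rw [if_neg (hne t (Finset.mem_powerset.mp hts) (Finset.nonempty_iff_ne_empty.mpr ht))]

end AddMonoidAlgebra

theorem ZMod.nsmul_pi_eq_zero {κ : Type*} (N : ℕ) (g : κ → ZMod N) : N • g = 0 := by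
  ext i
  simp only [Pi.smul_apply, nsmul_eq_mul, ZMod.natCast_self, zero_mul, Pi.zero_apply]

section Olson

open AddMonoidAlgebra

variable {ι : Type*} [Fintype ι] [DecidableEq ι]

theorem AddMonoidAlgebra.single_sub_one_mem_span_single_sub_one {k : Type*} [CommRing k]
    {N : ℕ} [NeZero N] (g : ι → ZMod N) :
    single g (1 : k) - 1 ∈
      Ideal.span (Set.range fun j => single (Pi.single j 1 : ι → ZMod N) (1 : k) - 1) := by
  set I := Ideal.span (Set.range fun j => single (Pi.single j 1 : ι → ZMod N) (1 : k) - 1)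
  let M : AddSubmonoid (ι → ZMod N) :=
    { carrier := {g | single g (1 : k) - 1 ∈ I}
      zero_mem' := by simp [← one_def]
      add_mem' := fun {a b} ha hb => by
        have hab : single (a + b) (1 : k) - 1 =
            single a 1 * (single b 1 - 1) + (single a 1 - 1) := by
          rw [mul_sub, single_mul_single, mul_one, mul_one]
          ring
        simpa [hab] using I.add_mem (I.mul_mem_left _ hb) ha }
  have hgen : ∀ j, (Pi.single j 1 : ι → ZMod N) ∈ M := fun j => Ideal.subset_span ⟨j, rfl⟩
  suffices g ∈ M from this
  rw [← Finset.univ_sum_single g]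
  refine M.sum_mem fun j _ => ?_
  have hj : Pi.single j (g j) = (g j).val • (Pi.single j 1 : ι → ZMod N) := by
    rw [← Pi.single_smul, nsmul_one, ZMod.natCast_zmod_val]
  rw [hj]
  exact M.nsmul_mem (hgen j) _

theorem exists_zero_sum_of_card_mul_lt (p k : ℕ) [Fact p.Prime]
    (S : Multiset (ι → ZMod (p ^ k))) (hS : Fintype.card ι * (p ^ k - 1) < Multiset.card S) :
    ∃ T ≤ S, T ≠ 0 ∧ T.sum = 0 := by
  classical
  have : CharP (AddMonoidAlgebra (ZMod p) (ι → ZMod (p ^ k))) p :=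
    charP_of_injective_algebraMap (R := ZMod p)
      (fun a b h => by simpa using congrArg (fun f => f.coeff 0) h) p
  have hnil : ∀ g : ι → ZMod (p ^ k), (single g (1 : ZMod p) - 1) ^ (p ^ k - 1 + 1) = 0 := by
    intro g
    rw [Nat.sub_add_cancel NeZero.one_le, sub_pow_char_pow, single_pow, ZMod.nsmul_pi_eq_zero,
      one_pow, one_pow, ← one_def, sub_self]
  obtain ⟨t, hts, htne, hsum⟩ := exists_sum_eq_zero_of_prod_single_sub_one_eq_zero
    S.toEnumFinset Prod.fst (Ideal.prod_eq_zero_of_mem_span_range _ (p ^ k - 1)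
      (fun j => hnil _) _ _ (fun i _ => single_sub_one_mem_span_single_sub_one _)
      (by rwa [Multiset.card_toEnumFinset]))
  exact ⟨t.val.map Prod.fst, Multiset.map_fst_le_of_subset_toEnumFinset hts,
    by simpa using htne.ne_empty, hsum⟩

end Olson

theorem Multiset.exists_replicate_le_of_card_mul_le {α : Type*} [Fintype α] [Nonempty α]
    (S : Multiset α) {e : ℕ} (h : Fintype.card α * e ≤ Multiset.card S) :
    ∃ a, Multiset.replicate e a ≤ S := by
  classical
  obtain ⟨a, -, ha⟩ := Finset.exists_le_of_sum_le (f := fun _ => e) (g := fun a => S.count a)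
    Finset.univ_nonempty
    (by simpa [Multiset.sum_count_eq_card fun a _ => Finset.mem_univ a] using h)
  exact ⟨a, Multiset.le_count_iff_replicate_le.mp ha⟩

theorem exists_zero_sum_card_le_exponent_of_etaCon_le {G : Type*} [AddCommGroup G] [Finite G]
    (S : Multiset G) (hS : EtaCon G ≤ Multiset.card S) :
    ∃ T ≤ S, T ≠ 0 ∧ Multiset.card T ≤ AddMonoid.exponent G ∧ T.sum = 0 := by
  have := Fintype.ofFinite G
  have hexp := AddMonoid.exponent_ne_zero_of_finite (G := G)
  -- by pigeonhole, some element occurs `exp G` times in any multiset of `|G| * exp G` elements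
  have hmem : Fintype.card G * AddMonoid.exponent G ∈ {t : ℕ | 1 ≤ t ∧
      ∀ S : Multiset G, t ≤ Multiset.card S →
        ∃ T, T ≤ S ∧ T ≠ 0 ∧ Multiset.card T ≤ AddMonoid.exponent G ∧ T.sum = 0} := by
    refine ⟨Nat.one_le_iff_ne_zero.mpr (mul_ne_zero Fintype.card_ne_zero hexp), fun S hS => ?_⟩
    obtain ⟨g, hg⟩ := S.exists_replicate_le_of_card_mul_le hS
    exact ⟨_, hg, Multiset.card_pos.mp (by rwa [Multiset.card_replicate, Nat.pos_iff_ne_zero]),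
      by simp, by simp [AddMonoid.exponent_nsmul_eq_zero]⟩
  exact (Nat.sInf_mem ⟨_, hmem⟩).2 S hS

theorem exists_zero_sum_card_le_of_etaCon_le {ι : Type*} [Finite ι] {m E : ℕ} [NeZero m]
    (hE : EtaCon (ι → ZMod m) ≤ E) (S : Multiset (ι → ZMod m)) (hS : E ≤ Multiset.card S) :
    ∃ T ≤ S, T ≠ 0 ∧ Multiset.card T ≤ m ∧ T.sum = 0 := by
  obtain ⟨T, hTS, hT0, hTcard, hTsum⟩ :=
    exists_zero_sum_card_le_exponent_of_etaCon_le S (hE.trans hS)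
  have hexp : AddMonoid.exponent (ι → ZMod m) ≤ m := Nat.le_of_dvd (NeZero.pos m)
    (AddMonoid.exponent_dvd_of_forall_nsmul_eq_zero (ZMod.nsmul_pi_eq_zero m))
  exact ⟨T, hTS, hT0, hTcard.trans hexp, hTsum⟩

theorem Multiset.exists_le_map_eq {α β : Type*} (f : α → β) {S : Multiset α} {T' : Multiset β}
    (h : T' ≤ S.map f) : ∃ T ≤ S, T.map f = T' := by
  classical
  induction T' using Multiset.induction generalizing S with
  | empty => exact ⟨0, Multiset.zero_le S, rfl⟩
  | cons b T' ih =>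
    obtain ⟨a, ha, rfl⟩ :=
      Multiset.mem_map.mp (Multiset.mem_of_le h (Multiset.mem_cons_self b T'))
    rw [← Multiset.cons_erase ha, Multiset.map_cons, Multiset.cons_le_cons_iff] at h
    obtain ⟨T, hT, rfl⟩ := ih h
    exact ⟨a ::ₘ T, (Multiset.cons_le_cons a hT).trans_eq (Multiset.cons_erase ha),
      Multiset.map_cons f a T⟩

section Exact

variable {K G H : Type*} [AddCommGroup K] [AddCommGroup G] [AddCommGroup H] {E m : ℕ}

theorem exists_submultiset_map_sum_eq_zero_card_le (φ : G →+ H)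
    (hH : ∀ S : Multiset H, E ≤ Multiset.card S →
      ∃ T ≤ S, T ≠ 0 ∧ Multiset.card T ≤ m ∧ T.sum = 0)
    (S : Multiset G) (hS : E ≤ Multiset.card S) :
    ∃ T ≤ S, T ≠ 0 ∧ Multiset.card T ≤ m ∧ φ T.sum = 0 := by
  obtain ⟨T', hT'S, hT'0, hT'card, hT'sum⟩ := hH (S.map φ) (by rwa [Multiset.card_map])
  obtain ⟨T, hTS, rfl⟩ := Multiset.exists_le_map_eq φ hT'S
  exact ⟨T, hTS, by rintro rfl; simp at hT'0, by rwa [Multiset.card_map] at hT'card,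
    by rwa [map_multiset_sum]⟩

theorem exists_disjoint_submultisets_map_sum_eq_zero (φ : G →+ H)
    (hH : ∀ S : Multiset H, E ≤ Multiset.card S →
      ∃ T ≤ S, T ≠ 0 ∧ Multiset.card T ≤ m ∧ T.sum = 0)
    (d : ℕ) (S : Multiset G) (hS : E + m * d ≤ Multiset.card S) :
    ∃ L : Multiset (Multiset G), Multiset.card L = d + 1 ∧ L.sum ≤ S ∧
      ∀ T ∈ L, T ≠ 0 ∧ φ T.sum = 0 := by
  classical
  induction d generalizing S with
  | zero =>
    obtain ⟨T, hTS, hT0, -, hT⟩ :=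
      exists_submultiset_map_sum_eq_zero_card_le φ hH S (by simpa using hS)
    exact ⟨{T}, rfl, by simpa using hTS, by simp [hT0, hT]⟩
  | succ d ih =>
    rw [Nat.mul_succ] at hS
    obtain ⟨T, hTS, hT0, hTcard, hT⟩ :=
      exists_submultiset_map_sum_eq_zero_card_le φ hH S (by omega)
    obtain ⟨L, hL, hLS, hLT⟩ := ih (S - T) (by rw [Multiset.card_sub hTS]; omega)
    refine ⟨T ::ₘ L, by rw [Multiset.card_cons, hL], ?_, ?_⟩
    · rw [Multiset.sum_cons]
      exact (add_le_add_right hLS T).trans_eq (add_tsub_cancel_of_le hTS)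
    · simpa [hT0, hT] using hLT

theorem exists_zero_sum_of_exact (ψ : K →+ G) (φ : G →+ H)
    (hexact : ∀ g, φ g = 0 → ∃ x, ψ x = g)
    (hH : ∀ S : Multiset H, E ≤ Multiset.card S →
      ∃ T ≤ S, T ≠ 0 ∧ Multiset.card T ≤ m ∧ T.sum = 0)
    {d : ℕ} (hK : ∀ S : Multiset K, d + 1 ≤ Multiset.card S → ∃ T ≤ S, T ≠ 0 ∧ T.sum = 0)
    (S : Multiset G) (hS : E + m * d ≤ Multiset.card S) :
    ∃ T ≤ S, T ≠ 0 ∧ T.sum = 0 := by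
  choose! lift hlift using hexact
  obtain ⟨L, hL, hLS, hLT⟩ := exists_disjoint_submultisets_map_sum_eq_zero φ hH d S hS
  obtain ⟨U, hUL, hU0, hUsum⟩ :=
    hK (L.map (lift ∘ Multiset.sum)) (by rw [Multiset.card_map, hL])
  obtain ⟨W, hWL, rfl⟩ := Multiset.exists_le_map_eq _ hUL
  refine ⟨W.sum, ?_, ?_, ?_⟩
  · obtain ⟨V, rfl⟩ := Multiset.le_iff_exists_add.mp hWL
    rw [Multiset.sum_add] at hLS
    exact le_self_add.trans hLS
  · obtain ⟨T, hT⟩ :=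
      Multiset.exists_mem_of_ne_zero (s := W) fun hW => hU0 (by rw [hW, Multiset.map_zero])
    exact fun h => (hLT T (Multiset.mem_of_le hWL hT)).1 (Multiset.sum_eq_zero_iff.mp h T hT)
  · calc W.sum.sum = (W.map Multiset.sum).sum := Multiset.sum_join
      _ = ((W.map (lift ∘ Multiset.sum)).map ψ).sum := by
        rw [Multiset.map_map]
        refine congrArg Multiset.sum (Multiset.map_congr rfl fun T hT => ?_)
        exact (hlift _ (hLT T (Multiset.mem_of_le hWL hT)).2).symm
      _ = 0 := by rw [← map_multiset_sum, hUsum, _root_.map_zero]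

end Exact

theorem AddMonoidHom.exists_compLeft_eq {K G H : Type*} [AddZeroClass K] [AddZeroClass G]
    [AddZeroClass H] {ψ : K →+ G} {φ : G →+ H} (hexact : ∀ g, φ g = 0 → ∃ x, ψ x = g)
    (ι : Type*) (g : ι → G) (hg : φ.compLeft ι g = 0) : ∃ x, ψ.compLeft ι x = g := by
  choose x hx using fun i => hexact (g i) (congrFun hg i)
  exact ⟨x, funext hx⟩

namespace ZMod

def nsmulHom {q n : ℕ} (m : ℕ) (h : n ∣ q * m) : ZMod q →+ ZMod n :=
  ZMod.lift q ⟨zmultiplesHom (ZMod n) (m : ZMod n), by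
    simpa [← Nat.cast_mul] using (ZMod.natCast_eq_zero_iff _ _).mpr h⟩

theorem nsmulHom_natCast {q n : ℕ} (m : ℕ) (h : n ∣ q * m) (j : ℕ) :
    nsmulHom m h (j : ZMod q) = j * m := by
  rw [← Int.cast_natCast, nsmulHom, ZMod.lift_coe]
  simp

theorem exists_nsmulHom_eq_of_castHom_eq_zero {q m n : ℕ} [NeZero n] (hmn : m ∣ n)
    (hn : n ∣ q * m) (x : ZMod n) (hx : castHom hmn (ZMod m) x = 0) :
    ∃ y, nsmulHom m hn y = x := by
  rw [← ZMod.natCast_zmod_val x, map_natCast, ZMod.natCast_eq_zero_iff] at hx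
  obtain ⟨j, hj⟩ := hx
  refine ⟨j, ?_⟩
  rw [nsmulHom_natCast, ← ZMod.natCast_zmod_val x, hj, Nat.cast_mul, mul_comm]

end ZMod

theorem maxPP_eq_one_or_mem (n : ℕ) : maxPP n = 1 ∨ maxPP n ∈ n.divisors.filter IsPrimePow := by
  unfold maxPP
  cases h : (n.divisors.filter IsPrimePow).max with
  | bot => exact Or.inl rfl
  | coe a => exact Or.inr (Finset.mem_of_max h)

theorem maxPP_dvd (n : ℕ) : maxPP n ∣ n := by
  rcases maxPP_eq_one_or_mem n with h | h
  · exact h ▸ one_dvd n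
  · exact Nat.dvd_of_mem_divisors (Finset.mem_filter.mp h).1

theorem exists_prime_pow_eq_maxPP (n : ℕ) : ∃ p k, p.Prime ∧ maxPP n = p ^ k := by
  rcases maxPP_eq_one_or_mem n with h | h
  · exact ⟨2, 0, Nat.prime_two, h⟩
  · obtain ⟨p, k, hp, -, hpk⟩ := (Finset.mem_filter.mp h).2
    exact ⟨p, k, hp.nat_prime, hpk.symm⟩

theorem stmt_8_general (n r : ℕ) (hn : 1 ≤ n) (c : ℕ) (hcr : r ≤ c)
    (hc : ∀ m : ℕ, 1 ≤ m → EtaCon (Fin r → ZMod m) ≤ c * (m - 1) + 1) :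
    DavCon (Fin r → ZMod n) ≤ r * (n - 1) + 1 + (c - r) * (n / maxPP n - 1) := by
  obtain ⟨p, k, hp, hq⟩ := exists_prime_pow_eq_maxPP n
  have : Fact p.Prime := ⟨hp⟩
  set m := n / maxPP n
  have hqm : p ^ k * m = n := hq ▸ Nat.mul_div_cancel' (maxPP_dvd n)
  have hm : 1 ≤ m := Nat.pos_of_ne_zero fun h => by simp [h] at hqm; omega
  have : NeZero n := ⟨by omega⟩
  have : NeZero m := ⟨by omega⟩
  have hbound : c * (m - 1) + 1 + m * (Fintype.card (Fin r) * (p ^ k - 1)) =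
      r * (n - 1) + 1 + (c - r) * (m - 1) := by
    have hpk : 1 ≤ p ^ k := NeZero.one_le
    rw [← hqm, Fintype.card_fin]
    zify [hm, hcr, hpk, Nat.one_le_iff_ne_zero.mpr (NeZero.ne (p ^ k * m))]
    ring
  refine Nat.sInf_le ⟨by omega, fun S hS => ?_⟩
  exact exists_zero_sum_of_exact ((ZMod.nsmulHom m (dvd_of_eq hqm.symm)).compLeft (Fin r))
    ((ZMod.castHom (Dvd.intro_left _ hqm) (ZMod m)).toAddMonoidHom.compLeft (Fin r))
    (AddMonoidHom.exists_compLeft_eq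
      (ZMod.exists_nsmulHom_eq_of_castHom_eq_zero (Dvd.intro_left _ hqm) _) _)
    (exists_zero_sum_card_le_of_etaCon_le (hc m hm))
    (exists_zero_sum_of_card_mul_lt p k) S (hbound ▸ hS)

/-- the main upper bound for `D(C_n^r)`. -/
theorem stmt_8 (n r : ℕ) (hn : 1 ≤ n) (hr : 1 ≤ r) (c : ℕ) (hcr : r ≤ c)
    (hc : ∀ m : ℕ, 1 ≤ m → EtaCon (Fin r → ZMod m) ≤ c * (m - 1) + 1) :
    DavCon (Fin r → ZMod n) ≤ r * (n - 1) + 1 + (c - r) * (n / maxPP n - 1) :=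
  stmt_8_general n r hn c hcr hc
end
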